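/- arXiv:1908.03006 — 8 statements merged into one kernel-verified Lean document; each statement's English description precedes it below -/
import Mathlib

section
/- Let X be a Hilbert space, Ξ = ℓ²(Λ) for a countable set Λ, let E : X → Ξ and D : Ξ → X be weakly sequentially continuous maps, and let P : Ξ → [0,∞] be coercive (i.e., P(ξₙ) bounded implies ‖ξₙ‖ bounded). Then for any c > 0 the functional R(x) = P(E(x)) + (c/2)‖x − D(E(x))‖² is coercive on X, i.e., every sequence (xₙ) with R(xₙ) bounded is bounded in norm. -/
open Filter Topology ENNReal
open scoped InnerProductSpace

/-- Weak convergence of a sequence in an inner product space. -/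
def WeakConv {X : Type*} [NormedAddCommGroup X] [InnerProductSpace ℝ X]
    (x : ℕ → X) (x0 : X) : Prop :=
  ∀ y : X, Tendsto (fun n => ⟪x n, y⟫_ℝ) atTop (nhds ⟪x0, y⟫_ℝ)

/-!
The penalty term bounds the codes `E (x n)` and the quadratic term bounds the residuals
`x n - D (E (x n))`, so it suffices that `D` maps bounded sequences to bounded ones. In the
separable Hilbert space `ℓ²(Λ)` bounded sequences have weakly convergent subsequences (sequential
Banach–Alaoglu, through the Riesz representation), and weakly convergent sequences are bounded
(Banach–Steinhaus). So if `‖D (ξ n)‖` were unbounded along a bounded `ξ`, a subsequence on which it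
blows up would contain a weakly convergent subsequence whose image under `D` is weakly convergent,
hence bounded.
-/

open TopologicalSpace Metric

theorem lp.separableSpace_of_ne_top {Λ : Type*} [Countable Λ] {p : ℝ≥0∞} [Fact (1 ≤ p)]
    (hp : p ≠ ⊤) : SeparableSpace (lp (fun _ : Λ => ℝ) p) := by
  classical
  rw [← isSeparable_univ_iff]
  have hspan : IsSeparable (Submodule.span ℝ (Set.range fun i : Λ => lp.single p i (1 : ℝ)) :
      Set (lp (fun _ : Λ => ℝ) p)) :=
    (Set.countable_range _).isSeparable.span
  refine (isSeparable_closure.mpr hspan).mono fun f _ => ?_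
  refine mem_closure_of_tendsto (lp.hasSum_single hp f) (Eventually.of_forall fun s => ?_)
  refine Submodule.sum_mem _ fun i _ => ?_
  rw [← mul_one (f i), ← smul_eq_mul, lp.single_smul]
  exact Submodule.smul_mem _ _ (Submodule.subset_span ⟨i, rfl⟩)

section Hilbert

variable {H : Type*} [NormedAddCommGroup H] [InnerProductSpace ℝ H]

theorem WeakConv.exists_norm_le [CompleteSpace H] {x : ℕ → H} {x0 : H} (h : WeakConv x x0) :
    ∃ C, ∀ n, ‖x n‖ ≤ C := by
  obtain ⟨C, hC⟩ := banach_steinhaus (g := fun n => innerSL ℝ (x n)) fun y =>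
    ((h y).norm.bddAbove_range).imp fun _ hC n => hC ⟨n, rfl⟩
  exact ⟨C, fun n => by simpa [innerSL_apply_norm] using hC n⟩

theorem exists_strictMono_weakConv [CompleteSpace H] [SeparableSpace H] {x : ℕ → H} {C : ℝ}
    (hC : ∀ n, ‖x n‖ ≤ C) : ∃ φ : ℕ → ℕ, StrictMono φ ∧ ∃ x0, WeakConv (fun k => x (φ k)) x0 := by
  let f : ℕ → WeakDual ℝ H := fun n => StrongDual.toWeakDual (InnerProductSpace.toDual ℝ H (x n))
  have hf : ∀ n, f n ∈ WeakDual.toStrongDual ⁻¹' closedBall 0 C := fun n => by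
    simpa [f] using hC n
  obtain ⟨a, -, φ, hφ, hlim⟩ := WeakDual.isSeqCompact_closedBall ℝ H 0 C hf
  refine ⟨φ, hφ, (InnerProductSpace.toDual ℝ H).symm (WeakDual.toStrongDual a), fun y => ?_⟩
  rw [InnerProductSpace.toDual_symm_apply]
  exact tendsto_iff_forall_eval_tendsto_topDualPairing.mp hlim y

theorem exists_norm_le_of_map_weakConv {K : Type*} [NormedAddCommGroup K] [InnerProductSpace ℝ K]
    [CompleteSpace H] [SeparableSpace H] [CompleteSpace K] {D : H → K}
    (hD : ∀ (ξ : ℕ → H) (ξ0 : H), WeakConv ξ ξ0 → WeakConv (fun n => D (ξ n)) (D ξ0))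
    {ξ : ℕ → H} {C : ℝ} (hC : ∀ n, ‖ξ n‖ ≤ C) : ∃ C', ∀ n, ‖D (ξ n)‖ ≤ C' := by
  by_contra! hunbdd
  choose ψ hψ using fun k : ℕ => hunbdd k
  obtain ⟨φ, hφ, ξ0, hweak⟩ := exists_strictMono_weakConv fun k => hC (ψ k)
  obtain ⟨C', hC'⟩ := (hD _ _ hweak).exists_norm_le
  obtain ⟨j, hj⟩ := exists_nat_gt C'
  have hφj : (j : ℝ) ≤ φ j := by exact_mod_cast hφ.le_apply
  linarith [hψ (φ j), hC' j]

end Hilbert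

theorem le_sqrt_of_ofReal_half_mul_sq_le {c t : ℝ} {M : ℝ≥0∞} (hc : 0 < c)
    (hM : M ≠ ⊤) (h : ENNReal.ofReal (c / 2 * t ^ 2) ≤ M) : t ≤ √(2 * M.toReal / c) := by
  refine Real.le_sqrt_of_sq_le ((le_div_iff₀ hc).mpr ?_)
  linarith [(ENNReal.ofReal_le_iff_le_toReal hM).mp h]

theorem anett_regularizer_coercive_general
    {Λ : Type*} [Countable Λ]
    {X : Type*} [NormedAddCommGroup X] [InnerProductSpace ℝ X] [CompleteSpace X]
    (E : X → lp (fun _ : Λ => ℝ) 2) (D : lp (fun _ : Λ => ℝ) 2 → X)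
    (hD : ∀ (ξ : ℕ → lp (fun _ : Λ => ℝ) 2) (ξ0 : lp (fun _ : Λ => ℝ) 2),
      WeakConv ξ ξ0 → WeakConv (fun n => D (ξ n)) (D ξ0))
    (P : lp (fun _ : Λ => ℝ) 2 → ℝ≥0∞)
    (hP : ∀ ξ : ℕ → lp (fun _ : Λ => ℝ) 2,
      (∃ M : ℝ≥0∞, M ≠ ⊤ ∧ ∀ n, P (ξ n) ≤ M) → ∃ C : ℝ, ∀ n, ‖ξ n‖ ≤ C)
    (c : ℝ) (hc : 0 < c) :
    ∀ x : ℕ → X,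
      (∃ M : ℝ≥0∞, M ≠ ⊤ ∧ ∀ n,
        P (E (x n)) + ENNReal.ofReal ((c / 2) * ‖x n - D (E (x n))‖ ^ 2) ≤ M) →
      ∃ C : ℝ, ∀ n, ‖x n‖ ≤ C := by
  rintro x ⟨M, hM, hR⟩
  have := lp.separableSpace_of_ne_top (Λ := Λ) (p := 2) ofNat_ne_top
  obtain ⟨C₁, hcode⟩ := hP (fun n => E (x n)) ⟨M, hM, fun n => le_self_add.trans (hR n)⟩
  obtain ⟨C₂, hdecode⟩ := exists_norm_le_of_map_weakConv hD hcode
  refine ⟨√(2 * M.toReal / c) + C₂, fun n => ?_⟩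
  have hresidual := le_sqrt_of_ofReal_half_mul_sq_le hc hM (le_add_self.trans (hR n))
  calc ‖x n‖ = ‖(x n - D (E (x n))) + D (E (x n))‖ := by rw [sub_add_cancel]
    _ ≤ ‖x n - D (E (x n))‖ + ‖D (E (x n))‖ := norm_add_le _ _
    _ ≤ √(2 * M.toReal / c) + C₂ := add_le_add hresidual (hdecode n)

theorem anett_regularizer_coercive
    {Λ : Type*} [Countable Λ]
    {X : Type*} [NormedAddCommGroup X] [InnerProductSpace ℝ X] [CompleteSpace X]
    (E : X → lp (fun _ : Λ => ℝ) 2) (D : lp (fun _ : Λ => ℝ) 2 → X)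
    (hE : ∀ (x : ℕ → X) (x0 : X), WeakConv x x0 → WeakConv (fun n => E (x n)) (E x0))
    (hD : ∀ (ξ : ℕ → lp (fun _ : Λ => ℝ) 2) (ξ0 : lp (fun _ : Λ => ℝ) 2),
      WeakConv ξ ξ0 → WeakConv (fun n => D (ξ n)) (D ξ0))
    (P : lp (fun _ : Λ => ℝ) 2 → ℝ≥0∞)
    (hP : ∀ ξ : ℕ → lp (fun _ : Λ => ℝ) 2,
      (∃ M : ℝ≥0∞, M ≠ ⊤ ∧ ∀ n, P (ξ n) ≤ M) → ∃ C : ℝ, ∀ n, ‖ξ n‖ ≤ C)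
    (c : ℝ) (hc : 0 < c) :
    ∀ x : ℕ → X,
      (∃ M : ℝ≥0∞, M ≠ ⊤ ∧ ∀ n,
        P (E (x n)) + ENNReal.ofReal ((c / 2) * ‖x n - D (E (x n))‖ ^ 2) ≤ M) →
      ∃ C : ℝ, ∀ n, ‖x n‖ ≤ C :=
  anett_regularizer_coercive_general E D hD P hP c hc
end

section
/- (Stability) Let X, Y be Hilbert spaces, K : X → Y weakly sequentially continuous, R : X → [0,∞] coercive and weakly sequentially lower semi-continuous, and D : Y × Y → [0,∞] satisfy: (i) D is sequentially lower semi-continuous w.r.t. weak convergence in the first argument and norm convergence in the second; (ii) D(y, yₙ) → 0 implies yₙ → y in norm; (iii) D(y, yₙ) → 0 implies D(z, yₙ) → D(z, y) for every z with D(z, y) < ∞. Fix y ∈ Y and α > 0 with some x⋆ satisfying D(Kx⋆, y) + αR(x⋆) < ∞. Let yₙ satisfy D(y, yₙ) → 0 and let xₙ minimize x ↦ D(Kx, yₙ) + αR(x). Then (xₙ) has a weakly convergent subsequence, every weak accumulation point x‡ minimizes x ↦ D(Kx, y) + αR(x), and along any subsequence converging weakly to x‡ one has R(x_{τ(n)})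 → R(x‡). -/
/-!
Lower semicontinuity of the data term and of `R` along a weakly convergent subsequence, together
with the minimality of each `xₙ` tested against a fixed competitor `x'`, gives
`A_y(x‡) ≤ liminf A_{yₙ}(xₙ) ≤ limsup A_{yₙ}(xₙ) ≤ A_y(x')`, where condition (iii) on `D` is what
makes `A_{yₙ}(x') → A_y(x')`. Tested against a competitor of finite value, the same chain bounds
`R(xₙ)` eventually, so coercivity and sequential Banach–Alaoglu give a weakly convergent
subsequence. Tested against `x‡` itself, it shows `A_{yₙ}(xₙ) → A_y(x‡)`; since neither summand
can drop in the limit, `R(xₙ) → R(x‡)`.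
-/

open Filter Topology ENNReal
open scoped InnerProductSpace

namespace ENNReal

variable {ι : Type*} {f : Filter ι} {u v : ι → ℝ≥0∞}

theorem le_liminf_add : liminf u f + liminf v f ≤ liminf (u + v) f := by
  rcases eq_or_ne (liminf u f) 0 with hu | hu
  · rw [hu, zero_add]; exact liminf_le_liminf (.of_forall fun i => le_add_self)
  rcases eq_or_ne (liminf v f) 0 with hv | hv
  · rw [hv, add_zero]; exact liminf_le_liminf (.of_forall fun i => le_self_add)
  refine le_of_forall_lt fun c hc => ?_
  obtain ⟨a, ha, b, hb, hab⟩ := exists_lt_add_of_lt_add hc hu hv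
  refine hab.trans_le (le_liminf_of_le (by isBoundedDefault) ?_)
  filter_upwards [eventually_lt_of_lt_liminf ha, eventually_lt_of_lt_liminf hb] with i hai hbi
  exact add_le_add hai.le hbi.le

theorem le_limsup_add [f.NeBot] : limsup u f + liminf v f ≤ limsup (u + v) f := by
  rcases eq_or_ne (limsup u f) 0 with hu | hu
  · rw [hu, zero_add]
    exact (liminf_le_liminf (.of_forall fun i => le_add_self)).trans liminf_le_limsup
  rcases eq_or_ne (liminf v f) 0 with hv | hv
  · rw [hv, add_zero]; exact limsup_le_limsup (.of_forall fun i => le_self_add)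
  refine le_of_forall_lt fun c hc => ?_
  obtain ⟨a, ha, b, hb, hab⟩ := exists_lt_add_of_lt_add hc hu hv
  refine hab.trans_le (le_limsup_of_frequently_le ?_ (by isBoundedDefault))
  refine ((frequently_lt_of_lt_limsup (by isBoundedDefault) ha).and_eventually
    (eventually_lt_of_lt_liminf hb)).mono fun i hi => ?_
  exact add_le_add hi.1.le hi.2.le

theorem tendsto_of_limsup_add_const_mul_le [f.NeBot] {a b c : ℝ≥0∞} (ha : a ≠ ⊤) (hc₀ : c ≠ 0)
    (hc : c ≠ ⊤) (hu : a ≤ liminf u f) (hv : b ≤ liminf v f)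
    (h : limsup (fun i => u i + c * v i) f ≤ a + c * b) : Tendsto v f (𝓝 b) := by
  have hsum : a + c * limsup v f ≤ a + c * b :=
    calc a + c * limsup v f = a + limsup (fun i => c * v i) f := by
          rw [limsup_const_mul_of_ne_top hc]
      _ ≤ limsup (fun i => c * v i) f + liminf u f := by rw [add_comm]; gcongr
      _ ≤ limsup (fun i => u i + c * v i) f :=
          le_limsup_add.trans_eq (congrArg (limsup · f) (funext fun i => add_comm _ _))
      _ ≤ a + c * b := h
  refine tendsto_of_le_liminf_of_limsup_le hv ?_
  exact (ENNReal.mul_le_mul_iff_right hc₀ hc).1 ((ENNReal.add_le_add_iff_left ha).1 hsum)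

end ENNReal

/-- The closed span `V` of the sequence is a separable Hilbert space, so sequential
Banach–Alaoglu applies to the Riesz representatives in `V`'s dual; testing against a general `z`
reduces to testing against its orthogonal projection onto `V`. -/
theorem exists_weakConv_subseq_of_bounded {X : Type*} [NormedAddCommGroup X]
    [InnerProductSpace ℝ X] [CompleteSpace X] {x : ℕ → X} {C : ℝ} (hC : ∀ n, ‖x n‖ ≤ C) :
    ∃ (τ : ℕ → ℕ) (x0 : X), StrictMono τ ∧ WeakConv (fun n => x (τ n)) x0 := by
  set V := (Submodule.span ℝ (Set.range x)).topologicalClosure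
  have : TopologicalSpace.SeparableSpace V :=
    ((TopologicalSpace.IsSeparable.span (Set.countable_range x).isSeparable).closure).separableSpace
  have : CompleteSpace V := (Submodule.isClosed_topologicalClosure _).completeSpace_coe
  have hxV (n : ℕ) : x n ∈ V :=
    Submodule.le_topologicalClosure _ (Submodule.subset_span ⟨n, rfl⟩)
  let φ (n : ℕ) : WeakDual ℝ V := (InnerProductSpace.toDual ℝ V ⟨x n, hxV n⟩).toWeakDual
  have hφ (n : ℕ) : φ n ∈ WeakDual.toStrongDual ⁻¹' Metric.closedBall 0 C :=
    mem_closedBall_zero_iff.2 (((InnerProductSpace.toDual ℝ V).norm_map _).trans_le (hC n))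
  obtain ⟨ψ, -, τ, hτ, hlim⟩ := WeakDual.isSeqCompact_closedBall ℝ V 0 C hφ
  refine ⟨τ, (InnerProductSpace.toDual ℝ V).symm ψ.toStrongDual, hτ, fun z => ?_⟩
  have key := ((WeakDual.eval_continuous (V.orthogonalProjectionOnto z)).tendsto ψ).comp hlim
  convert key using 2 with n
  · simp [φ]
  · rw [← Submodule.inner_orthogonalProjectionOnto_eq_of_mem_left,
      InnerProductSpace.toDual_symm_apply, WeakDual.toStrongDual_apply]

section Tikhonov

variable {X Y : Type*}

/-- The functional `A_{α,v}(x) = D(Kx, v) + α R(x)`, with `a = ENNReal.ofReal α`. -/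
noncomputable def tikhonov (K : X → Y) (R : X → ℝ≥0∞) (D : Y → Y → ℝ≥0∞) (a : ℝ≥0∞) (v : Y)
    (x : X) : ℝ≥0∞ :=
  D (K x) v + a * R x

variable {K : X → Y} {R : X → ℝ≥0∞} {D : Y → Y → ℝ≥0∞} {a : ℝ≥0∞} {y : Y} {yseq : ℕ → Y}
  {x : ℕ → X}

theorem limsup_tikhonov_le_of_isMinimizer
    (hxmin : ∀ n x', tikhonov K R D a (yseq n) (x n) ≤ tikhonov K R D a (yseq n) x') {x' : X}
    (hx' : Tendsto (fun n => D (K x') (yseq n)) atTop (𝓝 (D (K x') y))) :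
    limsup (fun n => tikhonov K R D a (yseq n) (x n)) atTop ≤ tikhonov K R D a y x' :=
  (limsup_le_limsup (.of_forall fun n => hxmin n x')).trans_eq
    (hx'.add tendsto_const_nhds).limsup_eq

theorem exists_eventually_le_of_isMinimizer (ha : a ≠ 0)
    (hxmin : ∀ n x', tikhonov K R D a (yseq n) (x n) ≤ tikhonov K R D a (yseq n) x') {x' : X}
    (hx' : Tendsto (fun n => D (K x') (yseq n)) atTop (𝓝 (D (K x') y)))
    (hfin : tikhonov K R D a y x' ≠ ⊤) :
    ∃ M ≠ ⊤, ∀ᶠ n in atTop, R (x n) ≤ M := by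
  set M := tikhonov K R D a y x' + 1
  have hM : M ≠ ⊤ := add_ne_top.2 ⟨hfin, one_ne_top⟩
  have hlt : ∀ᶠ n in atTop, tikhonov K R D a (yseq n) (x n) < M :=
    eventually_lt_of_limsup_lt ((limsup_tikhonov_le_of_isMinimizer hxmin hx').trans_lt
      (ENNReal.lt_add_right hfin one_ne_zero))
  refine ⟨M / a, (ENNReal.div_lt_top hM ha).ne, hlt.mono fun n hn => ?_⟩
  rw [ENNReal.le_div_iff_mul_le (.inl ha) (.inr hM), mul_comm]
  exact le_add_self.trans hn.le

variable [NormedAddCommGroup X] [InnerProductSpace ℝ X] [NormedAddCommGroup Y]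
  [InnerProductSpace ℝ Y]

theorem exists_weakConv_subseq_of_eventually_le [CompleteSpace X]
    (hcoercive : ∀ x : ℕ → X,
      (∃ M : ℝ≥0∞, M ≠ ⊤ ∧ ∀ n, R (x n) ≤ M) → ∃ C : ℝ, ∀ n, ‖x n‖ ≤ C)
    {M : ℝ≥0∞} (hM : M ≠ ⊤) (hR : ∀ᶠ n in atTop, R (x n) ≤ M) :
    ∃ (τ : ℕ → ℕ) (x0 : X), StrictMono τ ∧ WeakConv (fun n => x (τ n)) x0 := by
  obtain ⟨N, hN⟩ := eventually_atTop.1 hR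
  obtain ⟨C, hC⟩ := hcoercive (fun n => x (n + N)) ⟨M, hM, fun n => hN _ le_add_self⟩
  obtain ⟨τ, x0, hτ, hx0⟩ := exists_weakConv_subseq_of_bounded hC
  exact ⟨fun n => τ n + N, x0, fun m n h => Nat.add_lt_add_right (hτ h) N, hx0⟩

def WeakSeqContinuous (K : X → Y) : Prop :=
  ∀ (x : ℕ → X) (x0 : X), WeakConv x x0 → WeakConv (fun n => K (x n)) (K x0)

def WeakSeqLowerSemicontinuous (R : X → ℝ≥0∞) : Prop :=
  ∀ (x : ℕ → X) (x0 : X), WeakConv x x0 → R x0 ≤ liminf (fun n => R (x n)) atTop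

def WeakNormSeqLowerSemicontinuous (D : Y → Y → ℝ≥0∞) : Prop :=
  ∀ (useq : ℕ → Y) (u : Y) (vseq : ℕ → Y) (v : Y), WeakConv useq u → Tendsto vseq atTop (𝓝 v) →
    D u v ≤ liminf (fun n => D (useq n) (vseq n)) atTop

variable {xdag : X}

theorem tikhonov_le_liminf_of_weakConv (hK : WeakSeqContinuous K)
    (hR : WeakSeqLowerSemicontinuous R) (hD : WeakNormSeqLowerSemicontinuous D) (ha : a ≠ ⊤)
    (hy : Tendsto yseq atTop (𝓝 y)) (hx : WeakConv x xdag) :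
    tikhonov K R D a y xdag ≤ liminf (fun n => tikhonov K R D a (yseq n) (x n)) atTop :=
  calc tikhonov K R D a y xdag
      ≤ liminf (fun n => D (K (x n)) (yseq n)) atTop + liminf (fun n => a * R (x n)) atTop := by
        rw [liminf_const_mul_of_ne_top ha]
        exact add_le_add (hD _ _ _ _ (hK _ _ hx) hy) (by gcongr; exact hR _ _ hx)
    _ ≤ _ := ENNReal.le_liminf_add

theorem tikhonov_le_of_weakConv_of_isMinimizer (hK : WeakSeqContinuous K)
    (hR : WeakSeqLowerSemicontinuous R) (hD : WeakNormSeqLowerSemicontinuous D)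
    (hDy : ∀ z, D z y ≠ ⊤ → Tendsto (fun n => D z (yseq n)) atTop (𝓝 (D z y))) (ha : a ≠ ⊤)
    (hy : Tendsto yseq atTop (𝓝 y))
    (hxmin : ∀ n x', tikhonov K R D a (yseq n) (x n) ≤ tikhonov K R D a (yseq n) x')
    (hx : WeakConv x xdag) (x' : X) :
    tikhonov K R D a y xdag ≤ tikhonov K R D a y x' := by
  by_cases hx' : D (K x') y = ⊤
  · simp [tikhonov, hx']
  calc tikhonov K R D a y xdag
      ≤ liminf (fun n => tikhonov K R D a (yseq n) (x n)) atTop :=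
        tikhonov_le_liminf_of_weakConv hK hR hD ha hy hx
    _ ≤ limsup (fun n => tikhonov K R D a (yseq n) (x n)) atTop := liminf_le_limsup
    _ ≤ tikhonov K R D a y x' := limsup_tikhonov_le_of_isMinimizer hxmin (hDy _ hx')

theorem tendsto_of_weakConv_of_isMinimizer (hK : WeakSeqContinuous K)
    (hR : WeakSeqLowerSemicontinuous R) (hD : WeakNormSeqLowerSemicontinuous D)
    (hDy : ∀ z, D z y ≠ ⊤ → Tendsto (fun n => D z (yseq n)) atTop (𝓝 (D z y)))
    (ha₀ : a ≠ 0) (ha : a ≠ ⊤) (hproper : ∃ xs, tikhonov K R D a y xs ≠ ⊤)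
    (hy : Tendsto yseq atTop (𝓝 y))
    (hxmin : ∀ n x', tikhonov K R D a (yseq n) (x n) ≤ tikhonov K R D a (yseq n) x')
    (hx : WeakConv x xdag) :
    Tendsto (fun n => R (x n)) atTop (𝓝 (R xdag)) := by
  obtain ⟨xs, hxs⟩ := hproper
  have hfin : tikhonov K R D a y xdag ≠ ⊤ := ne_top_of_le_ne_top hxs
    (tikhonov_le_of_weakConv_of_isMinimizer hK hR hD hDy ha hy hxmin hx xs)
  have hDfin : D (K xdag) y ≠ ⊤ := (add_ne_top.1 hfin).1
  exact ENNReal.tendsto_of_limsup_add_const_mul_le hDfin ha₀ ha (hD _ _ _ _ (hK _ _ hx) hy)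
    (hR _ _ hx) (limsup_tikhonov_le_of_isMinimizer hxmin (hDy _ hDfin))

end Tikhonov

theorem anett_stability_general
    {X : Type*} [NormedAddCommGroup X] [InnerProductSpace ℝ X] [CompleteSpace X]
    {Y : Type*} [NormedAddCommGroup Y] [InnerProductSpace ℝ Y]
    (K : X → Y)
    (hK : ∀ (x : ℕ → X) (x0 : X), WeakConv x x0 → WeakConv (fun n => K (x n)) (K x0))
    (R : X → ℝ≥0∞)
    (hcoercive : ∀ x : ℕ → X,
      (∃ M : ℝ≥0∞, M ≠ ⊤ ∧ ∀ n, R (x n) ≤ M) → ∃ C : ℝ, ∀ n, ‖x n‖ ≤ C)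
    (hRlsc : ∀ (x : ℕ → X) (x0 : X), WeakConv x x0 →
      R x0 ≤ Filter.liminf (fun n => R (x n)) atTop)
    (D : Y → Y → ℝ≥0∞)
    -- (i) lower semi-continuity: weak convergence in the first, norm in the second argument
    (hDlsc : ∀ (useq : ℕ → Y) (u : Y) (vseq : ℕ → Y) (v : Y),
      WeakConv useq u → Tendsto vseq atTop (nhds v) →
      D u v ≤ Filter.liminf (fun n => D (useq n) (vseq n)) atTop)
    -- (ii) D-convergence implies norm convergence
    (hDnorm : ∀ (v : Y) (vseq : ℕ → Y),
      Tendsto (fun n => D v (vseq n)) atTop (nhds 0) → Tendsto vseq atTop (nhds v))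
    -- (iii) continuity property
    (hDcont : ∀ (v : Y) (vseq : ℕ → Y),
      Tendsto (fun n => D v (vseq n)) atTop (nhds 0) →
      ∀ z : Y, D z v ≠ ⊤ → Tendsto (fun n => D z (vseq n)) atTop (nhds (D z v)))
    (y : Y) (α : ℝ) (hα : 0 < α)
    (hproper : ∃ xs : X, D (K xs) y + ENNReal.ofReal α * R xs ≠ ⊤)
    (yseq : ℕ → Y) (hy : Tendsto (fun n => D y (yseq n)) atTop (nhds 0))
    (x : ℕ → X)
    (hxmin : ∀ n, ∀ x' : X,
      D (K (x n)) (yseq n) + ENNReal.ofReal α * R (x n) ≤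
        D (K x') (yseq n) + ENNReal.ofReal α * R x') :
    (∃ (τ : ℕ → ℕ) (xdag : X), StrictMono τ ∧ WeakConv (fun n => x (τ n)) xdag) ∧
    (∀ (τ : ℕ → ℕ) (xdag : X), StrictMono τ → WeakConv (fun n => x (τ n)) xdag →
      (∀ x' : X, D (K xdag) y + ENNReal.ofReal α * R xdag ≤
        D (K x') y + ENNReal.ofReal α * R x') ∧
      Tendsto (fun n => R (x (τ n))) atTop (nhds (R xdag))) := by
  have ha₀ : ENNReal.ofReal α ≠ 0 := (ENNReal.ofReal_pos.2 hα).ne'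
  have hDy := hDcont y yseq hy
  refine ⟨?_, fun τ xdag hτ hx => ?_⟩
  · obtain ⟨xs, hxs⟩ := hproper
    obtain ⟨M, hM, hRM⟩ := exists_eventually_le_of_isMinimizer ha₀ hxmin
      (hDy _ (add_ne_top.1 hxs).1) hxs
    exact exists_weakConv_subseq_of_eventually_le hcoercive hM hRM
  have hτy : Tendsto (fun n => yseq (τ n)) atTop (𝓝 y) :=
    (hDnorm y yseq hy).comp hτ.tendsto_atTop
  have hDτ (z : Y) (hz : D z y ≠ ⊤) : Tendsto (fun n => D z (yseq (τ n))) atTop (𝓝 (D z y)) :=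
    (hDy z hz).comp hτ.tendsto_atTop
  exact ⟨tikhonov_le_of_weakConv_of_isMinimizer hK hRlsc hDlsc hDτ ofReal_ne_top hτy
      (fun n => hxmin (τ n)) hx,
    tendsto_of_weakConv_of_isMinimizer hK hRlsc hDlsc hDτ ha₀ ofReal_ne_top hproper hτy
      (fun n => hxmin (τ n)) hx⟩

theorem anett_stability
    {X : Type*} [NormedAddCommGroup X] [InnerProductSpace ℝ X] [CompleteSpace X]
    {Y : Type*} [NormedAddCommGroup Y] [InnerProductSpace ℝ Y] [CompleteSpace Y]
    (K : X → Y)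
    (hK : ∀ (x : ℕ → X) (x0 : X), WeakConv x x0 → WeakConv (fun n => K (x n)) (K x0))
    (R : X → ℝ≥0∞)
    (hcoercive : ∀ x : ℕ → X,
      (∃ M : ℝ≥0∞, M ≠ ⊤ ∧ ∀ n, R (x n) ≤ M) → ∃ C : ℝ, ∀ n, ‖x n‖ ≤ C)
    (hRlsc : ∀ (x : ℕ → X) (x0 : X), WeakConv x x0 →
      R x0 ≤ Filter.liminf (fun n => R (x n)) atTop)
    (D : Y → Y → ℝ≥0∞)
    -- (i) lower semi-continuity: weak convergence in the first, norm in the second argument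
    (hDlsc : ∀ (useq : ℕ → Y) (u : Y) (vseq : ℕ → Y) (v : Y),
      WeakConv useq u → Tendsto vseq atTop (nhds v) →
      D u v ≤ Filter.liminf (fun n => D (useq n) (vseq n)) atTop)
    -- (ii) D-convergence implies norm convergence
    (hDnorm : ∀ (v : Y) (vseq : ℕ → Y),
      Tendsto (fun n => D v (vseq n)) atTop (nhds 0) → Tendsto vseq atTop (nhds v))
    -- (iii) continuity property
    (hDcont : ∀ (v : Y) (vseq : ℕ → Y),
      Tendsto (fun n => D v (vseq n)) atTop (nhds 0) →
      ∀ z : Y, D z v ≠ ⊤ → Tendsto (fun n => D z (vseq n)) atTop (nhds (D z v)))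
    (y : Y) (α : ℝ) (hα : 0 < α)
    (hproper : ∃ xs : X, D (K xs) y + ENNReal.ofReal α * R xs ≠ ⊤)
    (yseq : ℕ → Y) (hy : Tendsto (fun n => D y (yseq n)) atTop (nhds 0))
    (x : ℕ → X)
    (hxmin : ∀ n, ∀ x' : X,
      D (K (x n)) (yseq n) + ENNReal.ofReal α * R (x n) ≤
        D (K x') (yseq n) + ENNReal.ofReal α * R x') :
    (∃ (τ : ℕ → ℕ) (xdag : X), StrictMono τ ∧ WeakConv (fun n => x (τ n)) xdag) ∧
    (∀ (τ : ℕ → ℕ) (xdag : X), StrictMono τ → WeakConv (fun n => x (τ n)) xdag →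
      (∀ x' : X, D (K xdag) y + ENNReal.ofReal α * R xdag ≤
        D (K x') y + ENNReal.ofReal α * R x') ∧
      Tendsto (fun n => R (x (τ n))) atTop (nhds (R xdag))) :=
  anett_stability_general K hK R hcoercive hRlsc D hDlsc hDnorm hDcont y α hα hproper yseq hy x
    hxmin
end

section
/- Let Y be a Hilbert space and D(y₀, y₁) = H(y₁)‖y₀ − y₁‖² with H(y₁) = 1 for ‖y₁‖ ≤ 1 and H(y₁) = 2 otherwise. Fix y ∈ Y with ‖y‖ = 1, let δₙ ↓ 0 with δₙ > 0, and set yₙ = (1 + δₙ)y. Then D(y, yₙ) → 0, but for every z ≠ y one has D(z, yₙ) → 2‖z − y‖² ≠ D(z, y) = ‖z − y‖². Hence D fails the continuity property: D(y, yₙ) → 0 does not imply D(z, yₙ) → D(z, y). -/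
open Filter Topology

theorem weighted_similarity_discontinuous
    {Y : Type*} [NormedAddCommGroup Y] [InnerProductSpace ℝ Y]
    (H : Y → ℝ) (hH : ∀ y, H y = if ‖y‖ ≤ 1 then 1 else 2)
    (D : Y → Y → ℝ) (hD : ∀ y₀ y₁, D y₀ y₁ = H y₁ * ‖y₀ - y₁‖ ^ 2)
    (y : Y) (hy : ‖y‖ = 1)
    (δ : ℕ → ℝ) (hδpos : ∀ n, 0 < δ n) (hδanti : Antitone δ)
    (hδ0 : Tendsto δ atTop (nhds 0))
    (yseq : ℕ → Y) (hyseq : ∀ n, yseq n = (1 + δ n) • y) :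
    Tendsto (fun n => D y (yseq n)) atTop (nhds 0) ∧
    ∀ z : Y, z ≠ y →
      Tendsto (fun n => D z (yseq n)) atTop (nhds (2 * ‖z - y‖ ^ 2)) ∧
      2 * ‖z - y‖ ^ 2 ≠ D z y ∧
      D z y = ‖z - y‖ ^ 2 := by
  have hnorm : ∀ n, ‖yseq n‖ = 1 + δ n := by
    intro n
    rw [hyseq, norm_smul, hy, mul_one, Real.norm_eq_abs, abs_of_pos (by linarith [hδpos n])]
  have hHn : ∀ n, H (yseq n) = 2 := by
    intro n
    rw [hH, if_neg]
    rw [hnorm]; linarith [hδpos n]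
  have hylim : Tendsto yseq atTop (nhds y) := by
    have h1 : Tendsto (fun n => (1 + δ n) • y) atTop (nhds ((1 + (0:ℝ)) • y)) :=
      (tendsto_const_nhds.add hδ0).smul_const y
    simp only [add_zero, one_smul] at h1
    exact h1.congr (fun n => (hyseq n).symm)
  constructor
  · have h2 : Tendsto (fun n => 2 * ‖y - yseq n‖ ^ 2) atTop (nhds (2 * ‖y - y‖ ^ 2)) :=
      ((tendsto_const_nhds.sub hylim).norm.pow 2).const_mul 2
    simp only [sub_self, norm_zero] at h2
    norm_num at h2
    exact h2.congr fun n => by rw [hD, hHn]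
  · intro z hz
    have hne : ‖z - y‖ ≠ 0 := by simp [sub_eq_zero, hz]
    refine ⟨?_, ?_, ?_⟩
    · have h2 : Tendsto (fun n => 2 * ‖z - yseq n‖ ^ 2) atTop (nhds (2 * ‖z - y‖ ^ 2)) :=
        ((tendsto_const_nhds.sub hylim).norm.pow 2).const_mul 2
      exact h2.congr fun n => by rw [hD, hHn]
    · rw [hD, hH, if_pos (le_of_eq hy), one_mul]
      have ha : ‖z - y‖ ^ 2 ≠ 0 := pow_ne_zero _ hne
      intro h
      apply ha; linarith
    · rw [hD, hH, if_pos (le_of_eq hy), one_mul]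
end

section
/- (Instability counterexample) Let Y be a Hilbert space, y ∈ Y with ‖y‖ = 1, δₙ ↓ 0 positive, yₙ = (1+δₙ)y, α > 0, and D(y₀, y₁) = H(y₁)‖y₀−y₁‖² with H as above. Then the unique minimizer of x ↦ D(x, yₙ) + α‖x‖² is xₙ = yₙ/(1 + α/2), the unique minimizer of x ↦ D(x, y) + α‖x‖² is x‡ = y/(1+α), and xₙ → y/(1 + α/2) ≠ x‡. In particular, minimizers do not depend stably on the data despite D satisfying a quasi triangle inequality. -/
/-!
Completing the square, `z ↦ c ‖z - w‖² + α ‖z‖²` has the unique minimizer `(1 + α / c)⁻¹ • w`.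
The weight `H` is `2` at every `yₙ` (of norm `1 + δₙ > 1`) but `1` at `y`, so the minimizers
`yₙ / (1 + α / 2)` converge to `y / (1 + α / 2)` rather than to the minimizer `y / (1 + α)` for `y`.
-/

open Filter Topology

section CompletingTheSquare

variable {Y : Type*} [NormedAddCommGroup Y] [InnerProductSpace ℝ Y]

theorem weighted_norm_sub_sq_add_norm_sq_eq {c α : ℝ} (hc : c ≠ 0) (hcα : c + α ≠ 0) (w z : Y) :
    c * ‖z - w‖ ^ 2 + α * ‖z‖ ^ 2 =
      c * ‖(1 + α / c)⁻¹ • w - w‖ ^ 2 + α * ‖(1 + α / c)⁻¹ • w‖ ^ 2 +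
        (c + α) * ‖z - (1 + α / c)⁻¹ • w‖ ^ 2 := by
  set s := (1 + α / c)⁻¹
  have hs : s * (c + α) = c := by
    simp only [s]
    field_simp
  have hsub : s • w - w = (s - 1) • w := by rw [sub_smul, one_smul]
  simp only [hsub, norm_sub_sq_real, norm_smul, real_inner_smul_right, Real.norm_eq_abs, mul_pow,
    sq_abs]
  linear_combination (2 * inner ℝ z w - 2 * s * ‖w‖ ^ 2) * hs

theorem weighted_norm_sub_sq_add_norm_sq_lt {c α : ℝ} (hc : c ≠ 0) (hcα : 0 < c + α) {w z : Y}
    (hz : z ≠ (1 + α / c)⁻¹ • w) :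
    c * ‖(1 + α / c)⁻¹ • w - w‖ ^ 2 + α * ‖(1 + α / c)⁻¹ • w‖ ^ 2 <
      c * ‖z - w‖ ^ 2 + α * ‖z‖ ^ 2 := by
  have hgap : 0 < (c + α) * ‖z - (1 + α / c)⁻¹ • w‖ ^ 2 := by
    have := norm_pos_iff.mpr (sub_ne_zero.mpr hz)
    positivity
  rw [weighted_norm_sub_sq_add_norm_sq_eq hc hcα.ne' w z]
  linarith

end CompletingTheSquare

theorem instability_counterexample_general
    {Y : Type*} [NormedAddCommGroup Y] [InnerProductSpace ℝ Y]
    (H : Y → ℝ) (hH : ∀ y, H y = if ‖y‖ ≤ 1 then 1 else 2)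
    (D : Y → Y → ℝ) (hD : ∀ y₀ y₁, D y₀ y₁ = H y₁ * ‖y₀ - y₁‖ ^ 2)
    (y : Y) (hy : ‖y‖ = 1)
    (δ : ℕ → ℝ) (hδpos : ∀ n, 0 < δ n)
    (hδ0 : Tendsto δ atTop (nhds 0))
    (yseq : ℕ → Y) (hyseq : ∀ n, yseq n = (1 + δ n) • y)
    (α : ℝ) (hα : 0 < α)
    (x : ℕ → Y) (hx : ∀ n, x n = (1 + α / 2)⁻¹ • yseq n)
    (xdag : Y) (hxdag : xdag = (1 + α)⁻¹ • y) :
    (∀ n, ∀ z : Y, z ≠ x n →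
      D (x n) (yseq n) + α * ‖x n‖ ^ 2 < D z (yseq n) + α * ‖z‖ ^ 2) ∧
    (∀ z : Y, z ≠ xdag → D xdag y + α * ‖xdag‖ ^ 2 < D z y + α * ‖z‖ ^ 2) ∧
    Tendsto x atTop (nhds ((1 + α / 2)⁻¹ • y)) ∧
    (1 + α / 2)⁻¹ • y ≠ xdag := by
  have hHyseq (n : ℕ) : H (yseq n) = 2 := by
    have hnorm : ‖yseq n‖ = 1 + δ n := by
      rw [hyseq n, norm_smul, hy, mul_one, Real.norm_of_nonneg (by linarith [hδpos n])]
    rw [hH, if_neg (by linarith [hδpos n])]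
  have hHy : H y = 1 := by rw [hH, if_pos hy.le]
  refine ⟨fun n z hz => ?_, fun z hz => ?_, ?_, ?_⟩
  · rw [hD, hD, hHyseq, hx n]
    exact weighted_norm_sub_sq_add_norm_sq_lt two_ne_zero (by linarith) (hx n ▸ hz)
  · rw [hD, hD, hHy, hxdag, one_mul, one_mul]
    simpa using weighted_norm_sub_sq_add_norm_sq_lt one_ne_zero (by linarith) (by simpa [hxdag] using hz)
  · have hyseq_lim : Tendsto yseq atTop (𝓝 y) := by
      simpa [funext hyseq] using (hδ0.const_add 1).smul_const y
    simpa [funext hx] using hyseq_lim.const_smul (1 + α / 2)⁻¹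
  · rw [hxdag, Ne, smul_left_injective ℝ (norm_pos_iff.mp (hy ▸ one_pos)) |>.eq_iff, inv_inj]
    linarith

theorem instability_counterexample
    {Y : Type*} [NormedAddCommGroup Y] [InnerProductSpace ℝ Y]
    (H : Y → ℝ) (hH : ∀ y, H y = if ‖y‖ ≤ 1 then 1 else 2)
    (D : Y → Y → ℝ) (hD : ∀ y₀ y₁, D y₀ y₁ = H y₁ * ‖y₀ - y₁‖ ^ 2)
    (y : Y) (hy : ‖y‖ = 1)
    (δ : ℕ → ℝ) (hδpos : ∀ n, 0 < δ n) (hδanti : Antitone δ)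
    (hδ0 : Tendsto δ atTop (nhds 0))
    (yseq : ℕ → Y) (hyseq : ∀ n, yseq n = (1 + δ n) • y)
    (α : ℝ) (hα : 0 < α)
    (x : ℕ → Y) (hx : ∀ n, x n = (1 + α / 2)⁻¹ • yseq n)
    (xdag : Y) (hxdag : xdag = (1 + α)⁻¹ • y) :
    (∀ n, ∀ z : Y, z ≠ x n →
      D (x n) (yseq n) + α * ‖x n‖ ^ 2 < D z (yseq n) + α * ‖z‖ ^ 2) ∧
    (∀ z : Y, z ≠ xdag → D xdag y + α * ‖xdag‖ ^ 2 < D z y + α * ‖z‖ ^ 2) ∧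
    Tendsto x atTop (nhds ((1 + α / 2)⁻¹ • y)) ∧
    (1 + α / 2)⁻¹ • y ≠ xdag :=
  instability_counterexample_general H hH D hD y hy δ hδpos hδ0 yseq hyseq α hα x hx xdag hxdag
end

section
/- (Weak convergence of regularized solutions) Under the assumptions of the stability theorem (Conditions A and B), let y be attainable data, i.e., y ∈ K(dom R), let δₙ → 0 with D(y, yₙ) ≤ δₙ, choose αₙ > 0 with αₙ → 0 and δₙ/αₙ → 0, and let xₙ minimize x ↦ D(Kx, yₙ) + αₙR(x). Then: (a) (xₙ) has a weakly convergent subsequence; (b) every weak accumulation point is an R-minimizing solution of Kx = y; (c) along any weakly convergent subsequence with limit x‡ one has R(x_{τ(n)}) → R(x‡); (d) if the R-minimizing solution x‡ is unique, then xₙ ⇀ x‡. -/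
open Filter Topology ENNReal
open scoped InnerProductSpace

/-! Testing the Tikhonov functional of `x n` against any solution `x'` of `K x' = y` gives
`D (K xₙ) yₙ ≤ δₙ + αₙ R x'` and `R xₙ ≤ δₙ / αₙ + R x'`. The first bound makes the discrepancy
vanish, so by lower semicontinuity of `D` every weak accumulation point solves `K x = y`. The second
bounds `R xₙ`, hence `‖xₙ‖` by coercivity, so weakly convergent subsequences exist (Banach–Alaoglu);
it also gives `limsup R xₙ ≤ R x'`, which together with weak lower semicontinuity of `R` yields
minimality of the limit and convergence of `R` along the subsequence. If the minimizing solution is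
unique, every subsequence has a further subsequence converging weakly to it. -/

section WeakConvergence

variable {X : Type*} [NormedAddCommGroup X] [InnerProductSpace ℝ X]

namespace WeakConv

theorem coe_submodule {V : Submodule ℝ X} [V.HasOrthogonalProjection] {u : ℕ → V} {u0 : V}
    (h : WeakConv u u0) : WeakConv (fun n => (u n : X)) u0 := fun w => by
  simpa only [Submodule.inner_orthogonalProjectionOnto_eq_of_mem_left] using
    h (V.orthogonalProjectionOnto w)

theorem of_forall_subseq {x : ℕ → X} {x0 : X}
    (h : ∀ ns : ℕ → ℕ, Tendsto ns atTop atTop →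
      ∃ ms : ℕ → ℕ, WeakConv (fun n => x (ns (ms n))) x0) :
    WeakConv x x0 := fun w =>
  tendsto_of_subseq_tendsto fun ns hns =>
    let ⟨ms, hms⟩ := h ns hns
    ⟨ms, hms w⟩

end WeakConv

variable [CompleteSpace X]

theorem exists_subseq_weakConv_of_norm_le_of_separable [TopologicalSpace.SeparableSpace X]
    (x : ℕ → X) (C : ℝ) (hC : ∀ n, ‖x n‖ ≤ C) :
    ∃ (τ : ℕ → ℕ) (x0 : X), StrictMono τ ∧ WeakConv (fun n => x (τ n)) x0 := by
  -- Riesz representation followed by sequential Banach–Alaoglu.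
  let φ : ℕ → WeakDual ℝ X := fun n => StrongDual.toWeakDual (InnerProductSpace.toDual ℝ X (x n))
  obtain ⟨φ0, -, τ, hτ, hφ⟩ :=
    WeakDual.isSeqCompact_closedBall ℝ X 0 C (x := φ) fun n => by simpa [φ] using hC n
  refine ⟨τ, (InnerProductSpace.toDual ℝ X).symm (WeakDual.toStrongDual φ0), hτ, fun w => ?_⟩
  rw [InnerProductSpace.toDual_symm_apply]
  exact ((WeakDual.eval_continuous w).tendsto φ0).comp hφ

theorem exists_subseq_weakConv_of_norm_le (x : ℕ → X) (C : ℝ) (hC : ∀ n, ‖x n‖ ≤ C) :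
    ∃ (τ : ℕ → ℕ) (x0 : X), StrictMono τ ∧ WeakConv (fun n => x (τ n)) x0 := by
  -- Pass to the closed span of the sequence, which is separable; weak limits there are weak
  -- limits in `X` because inner products against `X` factor through the orthogonal projection.
  set V := (Submodule.span ℝ (Set.range x)).topologicalClosure
  have : CompleteSpace V := (Submodule.isClosed_topologicalClosure _).completeSpace_coe
  have : TopologicalSpace.SeparableSpace V := by
    refine TopologicalSpace.IsSeparable.separableSpace ?_
    rw [Submodule.topologicalClosure_coe]
    exact (Set.countable_range x).isSeparable.span.closure
  let u : ℕ → V := fun n =>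
    ⟨x n, Submodule.le_topologicalClosure _ (Submodule.subset_span ⟨n, rfl⟩)⟩
  obtain ⟨τ, u0, hτ, hu⟩ := exists_subseq_weakConv_of_norm_le_of_separable u C hC
  exact ⟨τ, u0, hτ, hu.coe_submodule⟩

end WeakConvergence

theorem ENNReal.tendsto_ofReal_zero {ι : Type*} {l : Filter ι} {u : ι → ℝ}
    (hu : Tendsto u l (𝓝 0)) : Tendsto (fun i => ENNReal.ofReal (u i)) l (𝓝 0) := by
  simpa using ENNReal.tendsto_ofReal hu

section Tikhonov

variable {X Y : Type*} {K : X → Y} {R : X → ℝ≥0∞} {D : Y → Y → ℝ≥0∞}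

def IsRMinimizingSolution (K : X → Y) (R : X → ℝ≥0∞) (y : Y) (z : X) : Prop :=
  K z = y ∧ ∀ x', K x' = y → R z ≤ R x'

def IsTikhonovMinimizer (K : X → Y) (R : X → ℝ≥0∞) (D : Y → Y → ℝ≥0∞) (v : Y) (a : ℝ)
    (z : X) : Prop :=
  ∀ x', D (K z) v + ENNReal.ofReal a * R z ≤ D (K x') v + ENNReal.ofReal a * R x'

namespace IsTikhonovMinimizer

variable {v y : Y} {a d : ℝ} {z x' : X}

theorem le_of_solution (hz : IsTikhonovMinimizer K R D v a z) (hx' : K x' = y)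
    (hv : D y v ≤ ENNReal.ofReal d) :
    D (K z) v + ENNReal.ofReal a * R z ≤ ENNReal.ofReal d + ENNReal.ofReal a * R x' :=
  (hz x').trans (by rw [hx']; gcongr)

theorem discrepancy_le (hz : IsTikhonovMinimizer K R D v a z) (hx' : K x' = y)
    (hv : D y v ≤ ENNReal.ofReal d) :
    D (K z) v ≤ ENNReal.ofReal d + ENNReal.ofReal a * R x' :=
  le_self_add.trans (hz.le_of_solution hx' hv)

theorem reg_le (hz : IsTikhonovMinimizer K R D v a z) (ha : 0 < a) (hx' : K x' = y)
    (hv : D y v ≤ ENNReal.ofReal d) :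
    R z ≤ ENNReal.ofReal (d / a) + R x' := by
  rw [← ENNReal.mul_le_mul_iff_right (ENNReal.ofReal_pos.mpr ha).ne' ENNReal.ofReal_ne_top]
  calc ENNReal.ofReal a * R z
      ≤ D (K z) v + ENNReal.ofReal a * R z := le_add_self
    _ ≤ ENNReal.ofReal d + ENNReal.ofReal a * R x' := hz.le_of_solution hx' hv
    _ = ENNReal.ofReal a * (ENNReal.ofReal (d / a) + R x') := by
      rw [mul_add, ← ENNReal.ofReal_mul ha.le, mul_div_cancel₀ _ ha.ne']

end IsTikhonovMinimizer

variable {y : Y} {yseq : ℕ → Y} {δ α : ℕ → ℝ} {x : ℕ → X} {x' : X}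

theorem tendsto_discrepancy_zero (hx : ∀ n, IsTikhonovMinimizer K R D (yseq n) (α n) (x n))
    (hnoise : ∀ n, D y (yseq n) ≤ ENNReal.ofReal (δ n)) (hδ : Tendsto δ atTop (𝓝 0))
    (hα : Tendsto α atTop (𝓝 0)) (hx' : K x' = y) (hRx' : R x' ≠ ⊤) :
    Tendsto (fun n => D (K (x n)) (yseq n)) atTop (𝓝 0) := by
  have hbound : Tendsto (fun n => ENNReal.ofReal (δ n) + ENNReal.ofReal (α n) * R x')
      atTop (𝓝 0) := by
    simpa using (ENNReal.tendsto_ofReal_zero hδ).add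
      (ENNReal.Tendsto.mul_const (ENNReal.tendsto_ofReal_zero hα) (Or.inr hRx'))
  exact tendsto_of_tendsto_of_tendsto_of_le_of_le tendsto_const_nhds hbound
    (fun _ => zero_le) fun n => (hx n).discrepancy_le hx' (hnoise n)

theorem limsup_reg_le (hx : ∀ n, IsTikhonovMinimizer K R D (yseq n) (α n) (x n))
    (hnoise : ∀ n, D y (yseq n) ≤ ENNReal.ofReal (δ n)) (hα : ∀ n, 0 < α n)
    (hδα : Tendsto (fun n => δ n / α n) atTop (𝓝 0)) (hx' : K x' = y) :
    limsup (fun n => R (x n)) atTop ≤ R x' := by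
  have hbound : Tendsto (fun n => ENNReal.ofReal (δ n / α n) + R x') atTop (𝓝 (R x')) := by
    simpa using (ENNReal.tendsto_ofReal_zero hδα).add_const (R x')
  calc limsup (fun n => R (x n)) atTop
      ≤ limsup (fun n => ENNReal.ofReal (δ n / α n) + R x') atTop :=
        limsup_le_limsup (.of_forall fun n => (hx n).reg_le (hα n) hx' (hnoise n))
    _ = R x' := hbound.limsup_eq

theorem exists_reg_bound (hx : ∀ n, IsTikhonovMinimizer K R D (yseq n) (α n) (x n))
    (hnoise : ∀ n, D y (yseq n) ≤ ENNReal.ofReal (δ n)) (hα : ∀ n, 0 < α n)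
    (hδα : BddAbove (Set.range fun n => δ n / α n)) (hx' : K x' = y) (hRx' : R x' ≠ ⊤) :
    ∃ M : ℝ≥0∞, M ≠ ⊤ ∧ ∀ n, R (x n) ≤ M := by
  obtain ⟨c, hc⟩ := hδα
  refine ⟨ENNReal.ofReal c + R x', ENNReal.add_ne_top.mpr ⟨ENNReal.ofReal_ne_top, hRx'⟩,
    fun n => ((hx n).reg_le (hα n) hx' (hnoise n)).trans ?_⟩
  gcongr
  exact hc ⟨n, rfl⟩

end Tikhonov

section Accumulation

variable {X Y : Type*} [NormedAddCommGroup X] [InnerProductSpace ℝ X]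
  [NormedAddCommGroup Y] [InnerProductSpace ℝ Y]
  {K : X → Y} {R : X → ℝ≥0∞} {D : Y → Y → ℝ≥0∞} {y : Y} {yseq : ℕ → Y} {x : ℕ → X} {xdag : X}

theorem map_eq_of_weakConv
    (hK : ∀ (x : ℕ → X) (x0 : X), WeakConv x x0 → WeakConv (fun n => K (x n)) (K x0))
    (hDdef : ∀ y₀ y₁ : Y, D y₀ y₁ = 0 → y₀ = y₁)
    (hDlsc : ∀ (useq : ℕ → Y) (u : Y) (vseq : ℕ → Y) (v : Y),
      WeakConv useq u → Tendsto vseq atTop (nhds v) →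
      D u v ≤ Filter.liminf (fun n => D (useq n) (vseq n)) atTop)
    (hy : Tendsto yseq atTop (𝓝 y)) (hD : Tendsto (fun n => D (K (x n)) (yseq n)) atTop (𝓝 0))
    (hx : WeakConv x xdag) : K xdag = y := by
  have h := hDlsc _ _ _ _ (hK x xdag hx) hy
  rw [hD.liminf_eq, nonpos_iff_eq_zero] at h
  exact hDdef _ _ h

theorem isRMinimizingSolution_of_weakConv
    (hK : ∀ (x : ℕ → X) (x0 : X), WeakConv x x0 → WeakConv (fun n => K (x n)) (K x0))
    (hRlsc : ∀ (x : ℕ → X) (x0 : X), WeakConv x x0 →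
      R x0 ≤ Filter.liminf (fun n => R (x n)) atTop)
    (hDdef : ∀ y₀ y₁ : Y, D y₀ y₁ = 0 → y₀ = y₁)
    (hDlsc : ∀ (useq : ℕ → Y) (u : Y) (vseq : ℕ → Y) (v : Y),
      WeakConv useq u → Tendsto vseq atTop (nhds v) →
      D u v ≤ Filter.liminf (fun n => D (useq n) (vseq n)) atTop)
    (hy : Tendsto yseq atTop (𝓝 y)) (hD : Tendsto (fun n => D (K (x n)) (yseq n)) atTop (𝓝 0))
    (hR : ∀ x', K x' = y → limsup (fun n => R (x n)) atTop ≤ R x')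
    (hx : WeakConv x xdag) :
    IsRMinimizingSolution K R y xdag ∧ Tendsto (fun n => R (x n)) atTop (𝓝 (R xdag)) := by
  have hKxdag : K xdag = y := map_eq_of_weakConv hK hDdef hDlsc hy hD hx
  have hliminf : R xdag ≤ liminf (fun n => R (x n)) atTop := hRlsc x xdag hx
  refine ⟨⟨hKxdag, fun x' hx' => (hliminf.trans liminf_le_limsup).trans (hR x' hx')⟩, ?_⟩
  exact tendsto_of_le_liminf_of_limsup_le hliminf (hR xdag hKxdag)

end Accumulation

theorem anett_weak_convergence_general
    {X : Type*} [NormedAddCommGroup X] [InnerProductSpace ℝ X] [CompleteSpace X]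
    {Y : Type*} [NormedAddCommGroup Y] [InnerProductSpace ℝ Y]
    (K : X → Y)
    (hK : ∀ (x : ℕ → X) (x0 : X), WeakConv x x0 → WeakConv (fun n => K (x n)) (K x0))
    (R : X → ℝ≥0∞)
    (hcoercive : ∀ x : ℕ → X,
      (∃ M : ℝ≥0∞, M ≠ ⊤ ∧ ∀ n, R (x n) ≤ M) → ∃ C : ℝ, ∀ n, ‖x n‖ ≤ C)
    (hRlsc : ∀ (x : ℕ → X) (x0 : X), WeakConv x x0 →
      R x0 ≤ Filter.liminf (fun n => R (x n)) atTop)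
    (D : Y → Y → ℝ≥0∞)
    (hDdef : ∀ y₀ y₁ : Y, D y₀ y₁ = 0 ↔ y₀ = y₁)
    (hDlsc : ∀ (useq : ℕ → Y) (u : Y) (vseq : ℕ → Y) (v : Y),
      WeakConv useq u → Tendsto vseq atTop (nhds v) →
      D u v ≤ Filter.liminf (fun n => D (useq n) (vseq n)) atTop)
    (hDnorm : ∀ (v : Y) (vseq : ℕ → Y),
      Tendsto (fun n => D v (vseq n)) atTop (nhds 0) → Tendsto vseq atTop (nhds v))
    -- attainable data
    (y : Y) (hattain : ∃ x : X, K x = y ∧ R x ≠ ⊤)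
    (δ : ℕ → ℝ) (hδ0 : Tendsto δ atTop (nhds 0))
    (yseq : ℕ → Y) (hnoise : ∀ n, D y (yseq n) ≤ ENNReal.ofReal (δ n))
    (α : ℕ → ℝ) (hαpos : ∀ n, 0 < α n) (hα0 : Tendsto α atTop (nhds 0))
    (hδα : Tendsto (fun n => δ n / α n) atTop (nhds 0))
    (x : ℕ → X)
    (hxmin : ∀ n, ∀ x' : X,
      D (K (x n)) (yseq n) + ENNReal.ofReal (α n) * R (x n) ≤
        D (K x') (yseq n) + ENNReal.ofReal (α n) * R x') :
    -- (a) weakly convergent subsequence exists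
    (∃ (τ : ℕ → ℕ) (xdag : X), StrictMono τ ∧ WeakConv (fun n => x (τ n)) xdag) ∧
    -- (b),(c) accumulation points are R-minimizing solutions and R converges along them
    (∀ (τ : ℕ → ℕ) (xdag : X), StrictMono τ → WeakConv (fun n => x (τ n)) xdag →
      (K xdag = y ∧ ∀ x' : X, K x' = y → R xdag ≤ R x') ∧
      Tendsto (fun n => R (x (τ n))) atTop (nhds (R xdag))) ∧
    -- (d) uniqueness implies weak convergence of the whole sequence
    (∀ xdag : X, (K xdag = y ∧ ∀ x' : X, K x' = y → R xdag ≤ R x') →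
      (∀ x'' : X, (K x'' = y ∧ ∀ x' : X, K x' = y → R x'' ≤ R x') → x'' = xdag) →
      WeakConv x xdag) := by
  obtain ⟨xb, hxbK, hxbR⟩ := hattain
  have hy : Tendsto yseq atTop (𝓝 y) :=
    hDnorm y yseq (tendsto_of_tendsto_of_tendsto_of_le_of_le tendsto_const_nhds
      (ENNReal.tendsto_ofReal_zero hδ0) (fun _ => zero_le) hnoise)
  have hD : Tendsto (fun n => D (K (x n)) (yseq n)) atTop (𝓝 0) :=
    tendsto_discrepancy_zero hxmin hnoise hδ0 hα0 hxbK hxbR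
  have hacc : ∀ τ : ℕ → ℕ, Tendsto τ atTop atTop → ∀ xdag : X,
      WeakConv (fun n => x (τ n)) xdag →
      IsRMinimizingSolution K R y xdag ∧ Tendsto (fun n => R (x (τ n))) atTop (𝓝 (R xdag)) :=
    fun τ hτ xdag =>
      isRMinimizingSolution_of_weakConv hK hRlsc (fun u v => (hDdef u v).mp) hDlsc (hy.comp hτ)
        (hD.comp hτ) fun x' hx' =>
          hτ.limsup_comp_le_limsup.trans (limsup_reg_le hxmin hnoise hαpos hδα hx')
  obtain ⟨C, hC⟩ :=
    hcoercive x (exists_reg_bound hxmin hnoise hαpos hδα.bddAbove_range hxbK hxbR)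
  refine ⟨exists_subseq_weakConv_of_norm_le x C hC, fun τ xdag hτ => hacc τ hτ.tendsto_atTop xdag,
    fun xdag _ huniq => WeakConv.of_forall_subseq fun ns hns => ?_⟩
  obtain ⟨ρ, x'', hρ, hx''⟩ :=
    exists_subseq_weakConv_of_norm_le (fun n => x (ns n)) C fun n => hC _
  obtain rfl := huniq x'' (hacc _ (hns.comp hρ.tendsto_atTop) x'' hx'').1
  exact ⟨ρ, hx''⟩

theorem anett_weak_convergence
    {X : Type*} [NormedAddCommGroup X] [InnerProductSpace ℝ X] [CompleteSpace X]
    {Y : Type*} [NormedAddCommGroup Y] [InnerProductSpace ℝ Y] [CompleteSpace Y]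
    (K : X → Y)
    (hK : ∀ (x : ℕ → X) (x0 : X), WeakConv x x0 → WeakConv (fun n => K (x n)) (K x0))
    (R : X → ℝ≥0∞)
    (hcoercive : ∀ x : ℕ → X,
      (∃ M : ℝ≥0∞, M ≠ ⊤ ∧ ∀ n, R (x n) ≤ M) → ∃ C : ℝ, ∀ n, ‖x n‖ ≤ C)
    (hRlsc : ∀ (x : ℕ → X) (x0 : X), WeakConv x x0 →
      R x0 ≤ Filter.liminf (fun n => R (x n)) atTop)
    (D : Y → Y → ℝ≥0∞)
    (hDdef : ∀ y₀ y₁ : Y, D y₀ y₁ = 0 ↔ y₀ = y₁)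
    (hDlsc : ∀ (useq : ℕ → Y) (u : Y) (vseq : ℕ → Y) (v : Y),
      WeakConv useq u → Tendsto vseq atTop (nhds v) →
      D u v ≤ Filter.liminf (fun n => D (useq n) (vseq n)) atTop)
    (hDnorm : ∀ (v : Y) (vseq : ℕ → Y),
      Tendsto (fun n => D v (vseq n)) atTop (nhds 0) → Tendsto vseq atTop (nhds v))
    -- attainable data
    (y : Y) (hattain : ∃ x : X, K x = y ∧ R x ≠ ⊤)
    (δ : ℕ → ℝ) (hδpos : ∀ n, 0 < δ n) (hδ0 : Tendsto δ atTop (nhds 0))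
    (yseq : ℕ → Y) (hnoise : ∀ n, D y (yseq n) ≤ ENNReal.ofReal (δ n))
    (α : ℕ → ℝ) (hαpos : ∀ n, 0 < α n) (hα0 : Tendsto α atTop (nhds 0))
    (hδα : Tendsto (fun n => δ n / α n) atTop (nhds 0))
    (x : ℕ → X)
    (hxmin : ∀ n, ∀ x' : X,
      D (K (x n)) (yseq n) + ENNReal.ofReal (α n) * R (x n) ≤
        D (K x') (yseq n) + ENNReal.ofReal (α n) * R x') :
    -- (a) weakly convergent subsequence exists
    (∃ (τ : ℕ → ℕ) (xdag : X), StrictMono τ ∧ WeakConv (fun n => x (τ n)) xdag) ∧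
    -- (b),(c) accumulation points are R-minimizing solutions and R converges along them
    (∀ (τ : ℕ → ℕ) (xdag : X), StrictMono τ → WeakConv (fun n => x (τ n)) xdag →
      (K xdag = y ∧ ∀ x' : X, K x' = y → R xdag ≤ R x') ∧
      Tendsto (fun n => R (x (τ n))) atTop (nhds (R xdag))) ∧
    -- (d) uniqueness implies weak convergence of the whole sequence
    (∀ xdag : X, (K xdag = y ∧ ∀ x' : X, K x' = y → R xdag ≤ R x') →
      (∀ x'' : X, (K x'' = y ∧ ∀ x' : X, K x' = y → R x'' ≤ R x') → x'' = xdag) →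
      WeakConv x xdag) :=
  anett_weak_convergence_general K hK R hcoercive hRlsc D hDdef hDlsc hDnorm y hattain δ hδ0 yseq
    hnoise α hαpos hα0 hδα x hxmin
end

section
/- (Convergence rate) Under the assumptions of the strong convergence theorem, suppose additionally D satisfies the quasi triangle inequality D(y₀,y₁) ≤ q(D(y₀,y₂) + D(y₂,y₁)) for some q ≥ 1, that R is Gâteaux differentiable at the R-minimizing solution x‡, and that there exist ε, c > 0 with Δ_R(x, x‡) ≤ R(x) − R(x‡) + c·√(D(Kx, Kx‡)) whenever ‖x − x‡‖ ≤ ε. Let y^δ satisfy D(y^δ, Kx‡)^{1/2} ≤ δ and D(Kx‡, y^δ)^{1/2} ≤ δ, and let x_α^δ minimize x ↦ D(Kx, y^δ) + αR(x) with ‖x_α^δ − x‡‖ ≤ ε. Then Δ_R(x_α^δ, x‡) ≤ δ²/α + c δ √q + c² α q/4. In particular, for α ≍ δ, Δ_R(x_α^δ, x‡) = O(δ) as δ → 0. -/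
open Filter Topology

theorem anett_convergence_rate
    {X : Type*} [NormedAddCommGroup X] [InnerProductSpace ℝ X]
    {Y : Type*} [NormedAddCommGroup Y] [InnerProductSpace ℝ Y]
    (K : X → Y)
    (D : Y → Y → ℝ) (hDnonneg : ∀ u v, 0 ≤ D u v)
    (q : ℝ) (hq : 1 ≤ q)
    (hquasi : ∀ y₀ y₁ y₂ : Y, D y₀ y₁ ≤ q * (D y₀ y₂ + D y₂ y₁))
    (R : X → ℝ) (hRnonneg : ∀ x, 0 ≤ R x)
    (xdag : X)
    -- xdag is an R-minimizing solution of K x = K xdag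
    (hmin : ∀ x : X, K x = K xdag → R xdag ≤ R x)
    (R' : X →L[ℝ] ℝ)
    (hGateaux : ∀ h : X,
      Tendsto (fun t : ℝ => (R (xdag + t • h) - R xdag) / t)
        (nhdsWithin 0 {0}ᶜ) (nhds (R' h)))
    (Δ : X → ℝ) (hΔ : ∀ x, Δ x = |R x - R xdag - R' (x - xdag)|)
    (ε c : ℝ) (hε : 0 < ε) (hc : 0 < c)
    (hsource : ∀ x : X, ‖x - xdag‖ ≤ ε →
      Δ x ≤ R x - R xdag + c * Real.sqrt (D (K x) (K xdag)))
    (δ α : ℝ) (hδ : 0 < δ) (hα : 0 < α)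
    (yδ : Y)
    (hnoise1 : Real.sqrt (D yδ (K xdag)) ≤ δ)
    (hnoise2 : Real.sqrt (D (K xdag) yδ) ≤ δ)
    (xαδ : X)
    (hxmin : ∀ x : X, D (K xαδ) yδ + α * R xαδ ≤ D (K x) yδ + α * R x)
    (hclose : ‖xαδ - xdag‖ ≤ ε) :
    Δ xαδ ≤ δ ^ 2 / α + c * δ * Real.sqrt q + c ^ 2 * α * q / 4 := by
  set d := D (K xαδ) yδ with hd
  have hdnn : 0 ≤ d := hDnonneg _ _
  set s := Real.sqrt d with hs
  have hsnn : 0 ≤ s := Real.sqrt_nonneg _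
  have hs2 : s ^ 2 = d := Real.sq_sqrt hdnn
  have hqnn : (0:ℝ) ≤ q := by linarith
  have hsq2 : Real.sqrt q ^ 2 = q := Real.sq_sqrt hqnn
  have hsqnn : 0 ≤ Real.sqrt q := Real.sqrt_nonneg _
  -- noise bounds
  have hD1 : D yδ (K xdag) ≤ δ ^ 2 := by
    have := Real.sq_sqrt (hDnonneg yδ (K xdag))
    nlinarith [Real.sqrt_nonneg (D yδ (K xdag))]
  have hD2 : D (K xdag) yδ ≤ δ ^ 2 := by
    have := Real.sq_sqrt (hDnonneg (K xdag) yδ)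
    nlinarith [Real.sqrt_nonneg (D (K xdag) yδ)]
  -- minimality at xdag
  have hmin' := hxmin xdag
  have hR : R xαδ - R xdag ≤ (δ ^ 2 - d) / α := by
    rw [le_div_iff₀ hα]
    nlinarith
  -- bound sqrt (D (K xαδ) (K xdag))
  have hDq : D (K xαδ) (K xdag) ≤ q * (d + δ ^ 2) := by
    have := hquasi (K xαδ) (K xdag) yδ
    nlinarith
  have hsqrtD : Real.sqrt (D (K xαδ) (K xdag)) ≤ Real.sqrt q * (s + δ) := by
    have h1 : Real.sqrt (D (K xαδ) (K xdag)) ≤ Real.sqrt (q * (d + δ ^ 2)) :=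
      Real.sqrt_le_sqrt hDq
    have h2 : Real.sqrt (q * (d + δ ^ 2)) ≤ Real.sqrt q * (s + δ) := by
      rw [show Real.sqrt q * (s + δ) = Real.sqrt (q * (s + δ) ^ 2) by
        rw [Real.sqrt_mul hqnn, Real.sqrt_sq (by positivity)]]
      apply Real.sqrt_le_sqrt
      nlinarith [mul_nonneg (mul_nonneg hqnn hsnn) hδ.le]
    linarith
  have hsrc := hsource xαδ hclose
  have key : c * Real.sqrt q * s - d / α ≤ c ^ 2 * α * q / 4 := by
    rw [sub_le_iff_le_add, ← hs2]
    rw [div_add_div _ _ (by norm_num : (4:ℝ) ≠ 0) (ne_of_gt hα), le_div_iff₀ (by positivity)]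
    have hq2 : α ^ 2 * c ^ 2 * (Real.sqrt q ^ 2) = α ^ 2 * c ^ 2 * q := by rw [hsq2]
    nlinarith [sq_nonneg (α * c * Real.sqrt q - 2 * s), hq2]
  have hRa : (δ ^ 2 - d) / α = δ ^ 2 / α - d / α := by ring
  calc Δ xαδ ≤ R xαδ - R xdag + c * Real.sqrt (D (K xαδ) (K xdag)) := hsrc
    _ ≤ (δ ^ 2 - d) / α + c * (Real.sqrt q * (s + δ)) := by
        have := mul_le_mul_of_nonneg_left hsqrtD (le_of_lt hc)
        linarith
    _ = δ ^ 2 / α + c * δ * Real.sqrt q + (c * Real.sqrt q * s - d / α) := by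
        rw [hRa]; ring
    _ ≤ δ ^ 2 / α + c * δ * Real.sqrt q + c ^ 2 * α * q / 4 := by linarith
end

section
/- (Source-type inequality for finite rank operators, part 1) Let X, Y be Hilbert spaces, K : X → Y a bounded linear operator with finite dimensional range, R : X → [0,∞) Lipschitz continuous with constant L, and x‡ an R-minimizing solution of Kx = Kx‡. Let P be the orthogonal projection onto ker(K) and let a > 0 satisfy ‖Kz‖ ≥ a‖z‖ for all z ∈ ker(K)^⊥. Then for all x ∈ X: R(x‡) − R(x) ≤ (L/a)·‖Kx − Kx‡‖. -/
/-!
Shift `x` by a vector of `(ker K)ᗮ` to a point `x₀` of the fibre `K x₀ = K x‡`. Minimality of `x‡`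
and the Lipschitz bound give `R x‡ - R x ≤ L ‖x₀ - x‖`, and the lower bound of `K` on `(ker K)ᗮ`
gives `a ‖x₀ - x‖ ≤ ‖K x - K x‡‖`.
-/

theorem ContinuousLinearMap.exists_apply_eq_sub_mem_orthogonal_ker
    {𝕜 E F : Type*} [RCLike 𝕜] [NormedAddCommGroup E] [InnerProductSpace 𝕜 E] [CompleteSpace E]
    [NormedAddCommGroup F] [NormedSpace 𝕜 F] (K : E →L[𝕜] F) (x y : E) :
    ∃ x₀, K x₀ = K y ∧ x₀ - x ∈ (LinearMap.ker K.toLinearMap)ᗮ := by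
  set N := LinearMap.ker K.toLinearMap
  have : CompleteSpace N := K.isClosed_ker.completeSpace_coe
  refine ⟨x + (y - x - N.starProjection (y - x)), ?_, ?_⟩
  · have hP : K (N.starProjection (y - x)) = 0 := N.starProjection_apply_mem (y - x)
    rw [map_add, map_sub K (y - x), hP, sub_zero, ← map_add, add_sub_cancel]
  · simpa only [add_sub_cancel_left] using N.sub_starProjection_mem_orthogonal (y - x)

theorem source_inequality_finite_rank_part1_general
    {X : Type*} [NormedAddCommGroup X] [InnerProductSpace ℝ X] [CompleteSpace X]
    {Y : Type*} [NormedAddCommGroup Y] [InnerProductSpace ℝ Y]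
    (K : X →L[ℝ] Y)
    (R : X → ℝ)
    (L : ℝ) (hL : 0 ≤ L)
    (hLip : ∀ x x' : X, |R x - R x'| ≤ L * ‖x - x'‖)
    (xdag : X) (hmin : ∀ x : X, K x = K xdag → R xdag ≤ R x)
    (a : ℝ) (ha : 0 < a)
    (hlb : ∀ z : X, z ∈ (LinearMap.ker K.toLinearMap)ᗮ → a * ‖z‖ ≤ ‖K z‖) :
    ∀ x : X, R xdag - R x ≤ (L / a) * ‖K x - K xdag‖ := by
  intro x
  obtain ⟨x₀, hKx₀, hperp⟩ := K.exists_apply_eq_sub_mem_orthogonal_ker x xdag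
  have hdist : ‖x₀ - x‖ ≤ ‖K x - K xdag‖ / a := by
    rw [le_div_iff₀ ha, mul_comm, norm_sub_rev (K x), ← hKx₀, ← map_sub]
    exact hlb _ hperp
  calc R xdag - R x ≤ R x₀ - R x := by linarith [hmin x₀ hKx₀]
    _ ≤ L * ‖x₀ - x‖ := (abs_le.mp (hLip x₀ x)).2
    _ ≤ L * (‖K x - K xdag‖ / a) := by gcongr
    _ = (L / a) * ‖K x - K xdag‖ := by ring

theorem source_inequality_finite_rank_part1
    {X : Type*} [NormedAddCommGroup X] [InnerProductSpace ℝ X] [CompleteSpace X]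
    {Y : Type*} [NormedAddCommGroup Y] [InnerProductSpace ℝ Y] [CompleteSpace Y]
    (K : X →L[ℝ] Y)
    (hfin : FiniteDimensional ℝ (LinearMap.range K.toLinearMap))
    (R : X → ℝ) (hRnonneg : ∀ x, 0 ≤ R x)
    (L : ℝ) (hL : 0 ≤ L)
    (hLip : ∀ x x' : X, |R x - R x'| ≤ L * ‖x - x'‖)
    (xdag : X) (hmin : ∀ x : X, K x = K xdag → R xdag ≤ R x)
    (a : ℝ) (ha : 0 < a)
    (hlb : ∀ z : X, z ∈ (LinearMap.ker K.toLinearMap)ᗮ → a * ‖z‖ ≤ ‖K z‖) :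
    ∀ x : X, R xdag - R x ≤ (L / a) * ‖K x - K xdag‖ :=
  source_inequality_finite_rank_part1_general K R L hL hLip xdag hmin a ha hlb
end

section
/- (Bregman distance bound for finite rank operators) Let X, Y be Hilbert spaces, K : X → Y bounded linear with finite dimensional range, R : X → [0,∞) Lipschitz with constant L and Gâteaux differentiable at an R-minimizing solution x‡ of Kx = Kx‡, with R'(x‡) vanishing on ker(K), and let a > 0 satisfy ‖Kz‖ ≥ a‖z‖ for z ∈ ker(K)^⊥. Then for all x ∈ X, the absolute Bregman distance satisfies Δ_R(x, x‡) ≤ R(x) − R(x‡) + ((2L + ‖R'(x‡)‖)/a)·‖Kx − Kx‡‖. -/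
/-!
Split `x - xdag = p + q` with `q ∈ ker K` and `p ∈ (ker K)ᗮ`, so that `a‖p‖ ≤ ‖K x - K xdag‖`.
Then `R' (x - xdag) = R' p`, and since `x - p` lies in the fibre `K⁻¹(K xdag)`, minimality and the
Lipschitz bound give the one-sided estimate `R xdag - R x ≤ L‖p‖`; a bound `-t ≤ c` upgrades to
`|t| ≤ t + 2c`, which is where the factor `2L` comes from.
-/

open Filter Topology

section FiniteRankBregman

variable {X : Type*} [NormedAddCommGroup X] [InnerProductSpace ℝ X] [CompleteSpace X]
  {Y : Type*} [NormedAddCommGroup Y] [InnerProductSpace ℝ Y]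
  {K : X →L[ℝ] Y} {a : ℝ}

lemma exists_preimage_norm_le
    (hlb : ∀ z : X, z ∈ (LinearMap.ker K.toLinearMap)ᗮ → a * ‖z‖ ≤ ‖K z‖) (h : X) :
    ∃ p : X, K p = K h ∧ a * ‖p‖ ≤ ‖K h‖ := by
  set S := LinearMap.ker K.toLinearMap
  have hKp : K (h - S.starProjection h) = K h := by
    rw [map_sub, sub_eq_self]
    exact S.starProjection_apply_mem h
  exact ⟨_, hKp, hKp ▸ hlb _ (S.sub_starProjection_mem_orthogonal h)⟩

lemma abs_apply_le_div_mul_norm_apply (ha : 0 < a)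
    (hlb : ∀ z : X, z ∈ (LinearMap.ker K.toLinearMap)ᗮ → a * ‖z‖ ≤ ‖K z‖)
    {R' : X →L[ℝ] ℝ} (hker : ∀ h : X, K h = 0 → R' h = 0) (h : X) :
    |R' h| ≤ ‖R'‖ / a * ‖K h‖ := by
  obtain ⟨p, hKp, hp⟩ := exists_preimage_norm_le hlb h
  have hR'p : R' h = R' p := by
    rw [← sub_eq_zero, ← map_sub]
    exact hker _ (by rw [map_sub, hKp, sub_self])
  calc |R' h| = ‖R' p‖ := by rw [hR'p, Real.norm_eq_abs]
    _ ≤ ‖R'‖ * ‖p‖ := R'.le_opNorm p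
    _ ≤ ‖R'‖ / a * ‖K h‖ := by
      rw [div_mul_eq_mul_div, le_div_iff₀ ha, mul_assoc, mul_comm ‖p‖]
      gcongr

lemma sub_le_div_mul_norm_sub_of_minimal_on_fibre (ha : 0 < a)
    (hlb : ∀ z : X, z ∈ (LinearMap.ker K.toLinearMap)ᗮ → a * ‖z‖ ≤ ‖K z‖)
    {R : X → ℝ} {L : ℝ} (hL : 0 ≤ L) (hLip : ∀ x x' : X, |R x - R x'| ≤ L * ‖x - x'‖)
    {xdag : X} (hmin : ∀ x : X, K x = K xdag → R xdag ≤ R x) (x : X) :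
    R xdag - R x ≤ L / a * ‖K x - K xdag‖ := by
  obtain ⟨p, hKp, hp⟩ := exists_preimage_norm_le hlb (x - xdag)
  have hfibre : R xdag ≤ R (x - p) := hmin _ (by rw [map_sub, hKp, map_sub, sub_sub_cancel])
  have hLipp : R (x - p) - R x ≤ L * ‖p‖ := by
    have := (abs_le.mp (hLip x (x - p))).1
    rw [sub_sub_cancel] at this
    linarith
  have hLpa : L * ‖p‖ ≤ L / a * ‖K x - K xdag‖ := by
    rw [div_mul_eq_mul_div, le_div_iff₀ ha, mul_assoc, mul_comm ‖p‖, ← map_sub]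
    gcongr
  linarith

end FiniteRankBregman

theorem bregman_distance_bound_finite_rank_general
    {X : Type*} [NormedAddCommGroup X] [InnerProductSpace ℝ X] [CompleteSpace X]
    {Y : Type*} [NormedAddCommGroup Y] [InnerProductSpace ℝ Y]
    (K : X →L[ℝ] Y)
    (R : X → ℝ)
    (L : ℝ) (hL : 0 ≤ L)
    (hLip : ∀ x x' : X, |R x - R x'| ≤ L * ‖x - x'‖)
    (xdag : X) (hmin : ∀ x : X, K x = K xdag → R xdag ≤ R x)
    (a : ℝ) (ha : 0 < a)
    (hlb : ∀ z : X, z ∈ (LinearMap.ker K.toLinearMap)ᗮ → a * ‖z‖ ≤ ‖K z‖)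
    (R' : X →L[ℝ] ℝ)
    (hker : ∀ h : X, K h = 0 → R' h = 0)
    (Δ : X → ℝ) (hΔ : ∀ x, Δ x = |R x - R xdag - R' (x - xdag)|) :
    ∀ x : X, Δ x ≤ R x - R xdag + ((2 * L + ‖R'‖) / a) * ‖K x - K xdag‖ := by
  intro x
  have hdecrease := sub_le_div_mul_norm_sub_of_minimal_on_fibre ha hlb hL hLip hmin x
  have hnonneg : 0 ≤ L / a * ‖K x - K xdag‖ := by positivity
  have hR : |R x - R xdag| ≤ R x - R xdag + 2 * (L / a * ‖K x - K xdag‖) :=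
    abs_le.2 ⟨by linarith, by linarith⟩
  have hR' : |R' (x - xdag)| ≤ ‖R'‖ / a * ‖K x - K xdag‖ := by
    simpa only [map_sub] using abs_apply_le_div_mul_norm_apply ha hlb hker (x - xdag)
  calc Δ x ≤ |R x - R xdag| + |R' (x - xdag)| := (hΔ x).trans_le (abs_sub _ _)
    _ ≤ R x - R xdag + 2 * (L / a * ‖K x - K xdag‖) + ‖R'‖ / a * ‖K x - K xdag‖ :=
      add_le_add hR hR'
    _ = R x - R xdag + ((2 * L + ‖R'‖) / a) * ‖K x - K xdag‖ := by ring

theorem bregman_distance_bound_finite_rank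
    {X : Type*} [NormedAddCommGroup X] [InnerProductSpace ℝ X] [CompleteSpace X]
    {Y : Type*} [NormedAddCommGroup Y] [InnerProductSpace ℝ Y] [CompleteSpace Y]
    (K : X →L[ℝ] Y)
    (hfin : FiniteDimensional ℝ (LinearMap.range K.toLinearMap))
    (R : X → ℝ) (hRnonneg : ∀ x, 0 ≤ R x)
    (L : ℝ) (hL : 0 ≤ L)
    (hLip : ∀ x x' : X, |R x - R x'| ≤ L * ‖x - x'‖)
    (xdag : X) (hmin : ∀ x : X, K x = K xdag → R xdag ≤ R x)
    (a : ℝ) (ha : 0 < a)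
    (hlb : ∀ z : X, z ∈ (LinearMap.ker K.toLinearMap)ᗮ → a * ‖z‖ ≤ ‖K z‖)
    (R' : X →L[ℝ] ℝ)
    (hGateaux : ∀ h : X,
      Tendsto (fun t : ℝ => (R (xdag + t • h) - R xdag) / t)
        (nhdsWithin 0 {0}ᶜ) (nhds (R' h)))
    (hker : ∀ h : X, K h = 0 → R' h = 0)
    (Δ : X → ℝ) (hΔ : ∀ x, Δ x = |R x - R xdag - R' (x - xdag)|) :
    ∀ x : X, Δ x ≤ R x - R xdag + ((2 * L + ‖R'‖) / a) * ‖K x - K xdag‖ :=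
  bregman_distance_bound_finite_rank_general K R L hL hLip xdag hmin a ha hlb R' hker Δ hΔ
end
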